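/- Fix j ∈ [2, n−1] and a permutation π ∈ S_n. Then π possesses a reduced word (in adjacent transpositions s_1,…,s_{n-1}) accepted by the automaton U(j) if and only if π avoids the pattern jki, i.e., there are no indices i < j < k (with j fixed) such that j, k, i appear as a subword of π in one-line notation. -/

import Mathlib

/-!
Reading the first letter `s_m` of a reduced word of `π` swaps the values `m` and `m + 1`,
which must occur as `m + 1 ⋯ m` in `π`. Along the healthy spine the index is the value sitting
at the original position of `j`: a letter `s_m` with `m ∉ {j - 1, j}` changes neither the
state nor whether the pattern `jki` occurs, while `s_j` moves both the state and the pattern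
from `j` to `j + 1`. Surviving after entering the ill state through `s_{j-1}` means that the
rest of the word avoids `s_j`, so that `π` maps `[1, j]` onto itself, and such permutations
avoid `jki`. Conversely, a permutation avoiding `jki` is sorted greedily, using `s_{j-1}` only
when it is the sole descent; avoidance then forces `π` to map `[1, j]` onto itself, and the
rest of the sorting never needs `s_j`.
-/

/-- The permutation of `ℕ` given by a word in the adjacent transpositions:
the letter `m` stands for `s_m = (m, m+1)`. -/
def wordProd (L : List ℕ) : Equiv.Perm ℕ :=
  (L.map (fun m => Equiv.swap m (m + 1))).prod

/-- `L` is a reduced word of `π ∈ S_n`: a word in the letters `s_1, …, s_{n-1}` whose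
product is `π`, of minimal length among such words. -/
def IsRWord (n : ℕ) (π : Equiv.Perm ℕ) (L : List ℕ) : Prop :=
  (∀ m ∈ L, m ∈ Finset.Icc 1 (n - 1)) ∧ wordProd L = π ∧
    ∀ L' : List ℕ, (∀ m ∈ L', m ∈ Finset.Icc 1 (n - 1)) → wordProd L' = π →
      L.length ≤ L'.length

/-- States of the permutree-sorting automata: healthy and ill states (accepting),
indexed by a spine position, and a dead (rejecting) state. -/
inductive AState : Type
  | healthy (m : ℕ) : AState
  | ill (m : ℕ) : AState
  | dead : AState
deriving DecidableEq

/-- Transition function of the automaton `𝕌(j)`: at the healthy state indexed `m`,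
reading `s_m` advances to the healthy state `m+1`, reading `s_{m-1}` moves to the ill
state `m`, from which reading `s_m` leads to the dead state; all other letters loop. -/
def Ustep : AState → ℕ → AState
  | .healthy m, x =>
      if x = m then .healthy (m + 1) else if x + 1 = m then .ill m else .healthy m
  | .ill m, x => if x = m then .dead else .ill m
  | .dead, _ => .dead

/-- The state reached by the automaton `𝕌(j)` after reading the word `L` from left to
right, starting at the healthy state `j`. -/
def Urun (j : ℕ) (L : List ℕ) : AState := L.foldl Ustep (.healthy j)

open Equiv

namespace Permutree

def symmetricGroup (n : ℕ) : Subgroup (Perm ℕ) :=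
  fixingSubgroup (Perm ℕ) (Set.Icc 1 n)ᶜ

section SymmetricGroup

variable {n : ℕ} {π : Perm ℕ}

lemma mem_symmetricGroup : π ∈ symmetricGroup n ↔ ∀ x, x ∉ Finset.Icc 1 n → π x = x := by
  simp [symmetricGroup, mem_fixingSubgroup_iff]

lemma apply_mem_Icc (hπ : π ∈ symmetricGroup n) {x : ℕ} (hx : x ∈ Finset.Icc 1 n) :
    π x ∈ Finset.Icc 1 n := by
  by_contra h
  exact h ((π.injective (mem_symmetricGroup.1 hπ _ h)).symm ▸ hx)

lemma mem_Icc_pred_iff {m : ℕ} : m ∈ Finset.Icc 1 (n - 1) ↔ 1 ≤ m ∧ m + 1 ≤ n := by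
  simp only [Finset.mem_Icc]
  omega

lemma swap_mem_symmetricGroup {m : ℕ} (hm : m ∈ Finset.Icc 1 (n - 1)) :
    swap m (m + 1) ∈ symmetricGroup n := by
  rw [mem_symmetricGroup]
  intro x hx
  simp only [Finset.mem_Icc] at hm hx
  rw [swap_apply_of_ne_of_ne] <;> omega

lemma wordProd_mem_symmetricGroup {L : List ℕ} (hL : ∀ m ∈ L, m ∈ Finset.Icc 1 (n - 1)) :
    wordProd L ∈ symmetricGroup n :=
  Subgroup.list_prod_mem _ <| by
    simpa using fun m hm => swap_mem_symmetricGroup (hL m hm)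

end SymmetricGroup

lemma wordProd_cons (m : ℕ) (L : List ℕ) :
    wordProd (m :: L) = swap m (m + 1) * wordProd L := by
  simp [wordProd]

lemma strictMonoOn_Icc_of_lt_add_one {β : Type*} [Preorder β] {f : ℕ → β} {a b : ℕ}
    (h : ∀ m, a ≤ m → m < b → f m < f (m + 1)) : StrictMonoOn f (Set.Icc a b) :=
  strictMonoOn_of_lt_succ Set.ordConnected_Icc fun m _ hm hm1 => by
    simp only [Order.succ_eq_add_one, Set.mem_Icc] at hm hm1
    exact h m hm.1 (by omega)

def IsLeftDescent (π : Perm ℕ) (m : ℕ) : Prop := π⁻¹ (m + 1) < π⁻¹ m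

section Descents

variable {n m : ℕ} {π : Perm ℕ}

lemma not_isLeftDescent_iff : ¬IsLeftDescent π m ↔ π⁻¹ m < π⁻¹ (m + 1) := by
  have : π⁻¹ m ≠ π⁻¹ (m + 1) := fun h => by simpa using π⁻¹.injective h
  unfold IsLeftDescent
  omega

lemma isLeftDescent_swap_mul_iff :
    IsLeftDescent (swap m (m + 1) * π) m ↔ ¬IsLeftDescent π m := by
  rw [not_isLeftDescent_iff, IsLeftDescent]
  simp [mul_inv_rev, swap_inv, swap_apply_left, swap_apply_right]

/-- For the least `x` moved by `π⁻¹`, both `π⁻¹ x` and `π x` exceed `x`, so `π⁻¹` cannot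
increase all the way from `x` to `π x`. -/
lemma exists_isLeftDescent (hπ : π ∈ symmetricGroup n) (h1 : π ≠ 1) :
    ∃ m ∈ Finset.Icc 1 (n - 1), IsLeftDescent π m := by
  have hex : ∃ x, π⁻¹ x ≠ x := by
    by_contra! h
    exact h1 (inv_eq_one.1 (Equiv.ext h))
  set x := Nat.find hex
  have hfix : ∀ y < x, π⁻¹ y = y := fun y hy => not_not.1 (Nat.find_min hex hy)
  have hx : π⁻¹ x ≠ x := Nat.find_spec hex
  have hxI : x ∈ Finset.Icc 1 n := by
    by_contra h
    exact hx (mem_symmetricGroup.1 (inv_mem hπ) x h)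
  have hx_lt : x < π x := by
    rcases lt_trichotomy (π x) x with h | h | h
    · exact absurd (hfix _ h) (by simpa using h.ne')
    · exact absurd (Perm.inv_eq_iff_eq.2 h.symm) hx
    · exact h
  have hx_lt_inv : x < π⁻¹ x := by
    rcases lt_trichotomy (π⁻¹ x) x with h | h | h
    · exact absurd (π⁻¹.injective (hfix _ h)) h.ne
    · exact absurd h hx
    · exact h
  have hπxI := apply_mem_Icc hπ hxI
  simp only [Finset.mem_Icc] at hxI hπxI
  by_contra! hnd
  have hmono := strictMonoOn_Icc_of_lt_add_one (f := ⇑π⁻¹) (a := x) (b := π x)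
    fun m hm hm' => not_isLeftDescent_iff.1 (hnd m (mem_Icc_pred_iff.2 ⟨by omega, by omega⟩))
  have := hmono ⟨le_rfl, hx_lt.le⟩ ⟨hx_lt.le, le_rfl⟩ hx_lt
  rw [Perm.inv_eq_iff_eq.2 rfl] at this
  omega

end Descents

def inversions (n : ℕ) (π : Perm ℕ) : Finset (ℕ × ℕ) :=
  (Finset.Icc 1 n ×ˢ Finset.Icc 1 n).filter fun p => p.1 < p.2 ∧ π p.2 < π p.1

def invCount (n : ℕ) (π : Perm ℕ) : ℕ := (inversions n π).card

section Inversions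

variable {n m : ℕ} {π : Perm ℕ}

lemma mem_inversions {p : ℕ × ℕ} : p ∈ inversions n π ↔
    (p.1 ∈ Finset.Icc 1 n ∧ p.2 ∈ Finset.Icc 1 n) ∧ p.1 < p.2 ∧ π p.2 < π p.1 := by
  simp [inversions]

lemma invCount_one : invCount n 1 = 0 := by
  simp only [invCount, Finset.card_eq_zero, inversions, Perm.coe_one, id_eq]
  exact Finset.filter_false_of_mem fun p _ h => (h.1.trans h.2).false

lemma swap_apply_lt_swap_apply_iff {x y : ℕ} (h : ¬(x = m ∧ y = m + 1))
    (h' : ¬(x = m + 1 ∧ y = m)) : swap m (m + 1) x < swap m (m + 1) y ↔ x < y := by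
  simp only [swap_apply_def]
  split_ifs <;> omega

lemma inversions_swap_mul (hπ : π ∈ symmetricGroup n) (hm : m ∈ Finset.Icc 1 (n - 1))
    (hd : ¬IsLeftDescent π m) :
    inversions n (swap m (m + 1) * π) = insert (π⁻¹ m, π⁻¹ (m + 1)) (inversions n π) := by
  have hlt := not_isLeftDescent_iff.1 hd
  have hmI : m ∈ Finset.Icc 1 n ∧ m + 1 ∈ Finset.Icc 1 n := by
    simp only [Finset.mem_Icc] at hm ⊢
    omega
  ext ⟨a, b⟩
  simp only [mem_inversions, Finset.mem_insert, Prod.mk.injEq, Perm.mul_apply,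
    Perm.eq_inv_iff_eq]
  by_cases hba : π b = m ∧ π a = m + 1
  · rw [← Perm.eq_inv_iff_eq, ← Perm.eq_inv_iff_eq] at hba
    obtain ⟨rfl, rfl⟩ := hba
    simp_all [IsLeftDescent]
  by_cases hab : π b = m + 1 ∧ π a = m
  · have ha := apply_mem_Icc (inv_mem hπ) hmI.1
    have hb := apply_mem_Icc (inv_mem hπ) hmI.2
    rw [← Perm.eq_inv_iff_eq, ← Perm.eq_inv_iff_eq] at hab
    obtain ⟨rfl, rfl⟩ := hab
    simp_all
  · rw [swap_apply_lt_swap_apply_iff hba hab]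
    tauto

lemma invCount_swap_mul (hπ : π ∈ symmetricGroup n) (hm : m ∈ Finset.Icc 1 (n - 1))
    (hd : ¬IsLeftDescent π m) : invCount n (swap m (m + 1) * π) = invCount n π + 1 := by
  rw [invCount, invCount, inversions_swap_mul hπ hm hd, Finset.card_insert_of_notMem]
  simp [inversions]

lemma invCount_swap_mul_of_isLeftDescent (hπ : π ∈ symmetricGroup n)
    (hm : m ∈ Finset.Icc 1 (n - 1)) (hd : IsLeftDescent π m) :
    invCount n (swap m (m + 1) * π) + 1 = invCount n π := by
  have := invCount_swap_mul (mul_mem (swap_mem_symmetricGroup hm) hπ) hm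
    fun h => isLeftDescent_swap_mul_iff.1 h hd
  rwa [swap_mul_self_mul, eq_comm] at this

lemma invCount_wordProd_le {L : List ℕ} (hL : ∀ m ∈ L, m ∈ Finset.Icc 1 (n - 1)) :
    invCount n (wordProd L) ≤ L.length := by
  induction L with
  | nil => simp [wordProd, invCount_one]
  | cons m L ih =>
    have hm := hL m List.mem_cons_self
    have hL' : ∀ k ∈ L, k ∈ Finset.Icc 1 (n - 1) := fun k hk => hL k (List.mem_cons_of_mem _ hk)
    have hπ := wordProd_mem_symmetricGroup hL'
    rw [wordProd_cons, List.length_cons]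
    by_cases hd : IsLeftDescent (wordProd L) m
    · have := invCount_swap_mul_of_isLeftDescent hπ hm hd
      have := ih hL'
      omega
    · rw [invCount_swap_mul hπ hm hd]
      exact Nat.succ_le_succ (ih hL')

end Inversions

def PreservesIic (j : ℕ) (π : Perm ℕ) : Prop := ∀ x, π x ≤ j ↔ x ≤ j

section Preserves

variable {n j m : ℕ} {π σ : Perm ℕ}

lemma PreservesIic.mul (hπ : PreservesIic j π) (hσ : PreservesIic j σ) :
    PreservesIic j (π * σ) := fun x => by
  rw [Perm.mul_apply, hπ, hσ]

lemma preservesIic_swap (h : m ≠ j) : PreservesIic j (swap m (m + 1)) := fun x => by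
  rw [swap_apply_def]
  split_ifs <;> omega

lemma preservesIic_wordProd {L : List ℕ} (h : j ∉ L) : PreservesIic j (wordProd L) := by
  induction L with
  | nil => exact fun x => Iff.rfl
  | cons m L ih =>
    rw [List.mem_cons, not_or] at h
    rw [wordProd_cons]
    exact (preservesIic_swap (Ne.symm h.1)).mul (ih h.2)

lemma preservesIic_of_mapsTo (h : ∀ x ≤ j, π x ≤ j) : PreservesIic j π := by
  have hbij : Set.BijOn π (Set.Iic j) (Set.Iic j) :=
    (Set.finite_Iic j).injOn_iff_bijOn_of_mapsTo h |>.1 π.injective.injOn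
  intro x
  refine ⟨fun hx => ?_, h x⟩
  obtain ⟨y, hy, hyx⟩ := hbij.surjOn (Set.mem_Iic.2 hx)
  exact π.injective hyx ▸ hy

lemma preservesIic_zero (hπ : π ∈ symmetricGroup n) : PreservesIic 0 π :=
  preservesIic_of_mapsTo fun x hx => by
    rw [Nat.le_zero.1 hx, mem_symmetricGroup.1 hπ 0 (by simp)]

lemma PreservesIic.not_isLeftDescent (h : PreservesIic j π) : ¬IsLeftDescent π j := by
  have h1 : π⁻¹ j ≤ j := (h _).1 (by simp)
  have h2 : ¬π⁻¹ (j + 1) ≤ j := fun h' => by simpa using (h _).2 h'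
  unfold IsLeftDescent
  omega

theorem exists_word_of_preservesIic {π : Perm ℕ} (hπ : π ∈ symmetricGroup n)
    (hj : PreservesIic j π) :
    ∃ L : List ℕ, (∀ m ∈ L, m ∈ Finset.Icc 1 (n - 1)) ∧ wordProd L = π ∧
      L.length = invCount n π ∧ j ∉ L := by
  by_cases h1 : π = 1
  · exact ⟨[], by simp, by simp [h1, wordProd], by simp [h1, invCount_one], by simp⟩
  obtain ⟨m, hm, hd⟩ := exists_isLeftDescent hπ h1
  have hmj : m ≠ j := fun h => hj.not_isLeftDescent (h ▸ hd)
  have hcount := invCount_swap_mul_of_isLeftDescent hπ hm hd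
  obtain ⟨L, hL, hprod, hlen, hjL⟩ := exists_word_of_preservesIic
    (mul_mem (swap_mem_symmetricGroup hm) hπ) ((preservesIic_swap hmj).mul hj)
  refine ⟨m :: L, ?_, ?_, ?_, ?_⟩
  · exact List.forall_mem_cons.2 ⟨hm, hL⟩
  · rw [wordProd_cons, hprod, swap_mul_self_mul]
  · rw [List.length_cons, hlen, hcount]
  · simpa [Ne.symm hmj] using hjL
termination_by invCount n π

end Preserves

section ReducedWords

variable {n m : ℕ} {π : Perm ℕ} {L : List ℕ}

theorem isRWord_iff : IsRWord n π L ↔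
    (∀ m ∈ L, m ∈ Finset.Icc 1 (n - 1)) ∧ wordProd L = π ∧ L.length = invCount n π := by
  constructor
  · rintro ⟨hL, hprod, hmin⟩
    obtain ⟨L', hL', hprod', hlen', -⟩ :=
      exists_word_of_preservesIic (hprod ▸ wordProd_mem_symmetricGroup hL) (preservesIic_zero
        (hprod ▸ wordProd_mem_symmetricGroup hL))
    have := hmin L' hL' hprod'
    have := invCount_wordProd_le hL
    refine ⟨hL, hprod, ?_⟩
    rw [hprod] at this
    omega
  · rintro ⟨hL, hprod, hlen⟩
    refine ⟨hL, hprod, fun L' hL' hprod' => ?_⟩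
    have := invCount_wordProd_le hL'
    rw [hprod'] at this
    omega

lemma IsRWord.cons (hm : m ∈ Finset.Icc 1 (n - 1)) (hd : IsLeftDescent π m)
    (h : IsRWord n (swap m (m + 1) * π) L) : IsRWord n π (m :: L) := by
  obtain ⟨hL, hprod, hlen⟩ := isRWord_iff.1 h
  have hπ : π ∈ symmetricGroup n := by
    rw [← swap_mul_self_mul m (m + 1) π, ← hprod]
    exact mul_mem (swap_mem_symmetricGroup hm) (wordProd_mem_symmetricGroup hL)
  refine isRWord_iff.2 ⟨?_, ?_, ?_⟩
  · exact List.forall_mem_cons.2 ⟨hm, hL⟩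
  · rw [wordProd_cons, hprod, swap_mul_self_mul]
  · rw [List.length_cons, hlen, invCount_swap_mul_of_isLeftDescent hπ hm hd]

lemma IsRWord.isLeftDescent_and_tail (h : IsRWord n π (m :: L)) :
    IsLeftDescent π m ∧ IsRWord n (swap m (m + 1) * π) L := by
  obtain ⟨hL, hprod, hlen⟩ := isRWord_iff.1 h
  have hm := hL m List.mem_cons_self
  have hL' : ∀ k ∈ L, k ∈ Finset.Icc 1 (n - 1) := fun k hk => hL k (List.mem_cons_of_mem _ hk)
  have hπ : π ∈ symmetricGroup n := hprod ▸ wordProd_mem_symmetricGroup hL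
  have htail : wordProd L = swap m (m + 1) * π := by
    rw [← hprod, wordProd_cons, swap_mul_self_mul]
  have hle := invCount_wordProd_le hL'
  rw [htail] at hle
  rw [List.length_cons] at hlen
  have hd : IsLeftDescent π m := by
    by_contra hd
    have := invCount_swap_mul hπ hm hd
    omega
  have := invCount_swap_mul_of_isLeftDescent hπ hm hd
  exact ⟨hd, isRWord_iff.2 ⟨hL', htail, by omega⟩⟩

end ReducedWords

section Automaton

variable {j m : ℕ} {L : List ℕ}

lemma Urun_cons_self : Urun j (j :: L) = Urun (j + 1) L := by
  simp [Urun, Ustep]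

lemma Urun_cons_of_ne (h : m ≠ j) (h' : m + 1 ≠ j) : Urun j (m :: L) = Urun j L := by
  simp [Urun, Ustep, h, h']

lemma Urun_cons_pred : Urun (m + 1) (m :: L) = L.foldl Ustep (.ill (m + 1)) := by
  simp [Urun, Ustep]

lemma foldl_Ustep_dead : L.foldl Ustep .dead = .dead := by
  induction L with
  | nil => rfl
  | cons x L ih => simpa [Ustep] using ih

lemma foldl_Ustep_ill_ne_dead_iff : L.foldl Ustep (.ill j) ≠ .dead ↔ j ∉ L := by
  induction L with
  | nil => simp
  | cons x L ih =>
    by_cases hx : x = j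
    · simp [Ustep, hx, foldl_Ustep_dead]
    · simp [Ustep, hx, ih, Ne.symm hx]

end Automaton

def ContainsJKI (n j : ℕ) (π : Perm ℕ) : Prop :=
  ∃ p q r : ℕ, 1 ≤ p ∧ p < q ∧ q < r ∧ r ≤ n ∧ π p = j ∧ j < π q ∧ π r < j

section Pattern

variable {n j m : ℕ} {π : Perm ℕ}

lemma PreservesIic.not_containsJKI (h : PreservesIic j π) : ¬ContainsJKI n j π := by
  rintro ⟨p, q, r, -, hpq, hqr, -, hp, hq, hr⟩
  have := (h p).1 hp.le
  have := (h q).not.1 hq.not_ge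
  have := (h r).1 hr.le
  omega

lemma containsJKI_swap_mul_iff (h : m ≠ j) (h' : m + 1 ≠ j) :
    ContainsJKI n j (swap m (m + 1) * π) ↔ ContainsJKI n j π := by
  have key : ∀ y, (swap m (m + 1) y = j ↔ y = j) ∧ (j < swap m (m + 1) y ↔ j < y) ∧
      (swap m (m + 1) y < j ↔ y < j) := fun y => by
    rw [swap_apply_def]
    split_ifs <;> omega
  simp only [ContainsJKI, Perm.mul_apply, fun y => (key y).1, fun y => (key y).2.1,
    fun y => (key y).2.2]

lemma containsJKI_swap_mul_iff_of_isLeftDescent (hd : IsLeftDescent π j) :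
    ContainsJKI n (j + 1) (swap j (j + 1) * π) ↔ ContainsJKI n j π := by
  unfold IsLeftDescent at hd
  constructor
  · rintro ⟨p, q, r, h1, hpq, hqr, hrn, hp, hq, hr⟩
    simp only [Perm.mul_apply, swap_apply_def] at hp hq hr
    have hpj : π p = j := by split_ifs at hp <;> omega
    have hp' : p = π⁻¹ j := Perm.eq_inv_iff_eq.2 hpj
    have hr1 : π r ≠ j + 1 := fun h => by
      have := Perm.eq_inv_iff_eq.2 h
      omega
    exact ⟨p, q, r, h1, hpq, hqr, hrn, hpj, by split_ifs at hq <;> omega,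
      by split_ifs at hr <;> omega⟩
  · rintro ⟨p, q, r, h1, hpq, hqr, hrn, hp, hq, hr⟩
    have hp' : p = π⁻¹ j := Perm.eq_inv_iff_eq.2 hp
    have hq1 : π q ≠ j + 1 := fun h => by
      have := Perm.eq_inv_iff_eq.2 h
      omega
    refine ⟨p, q, r, h1, hpq, hqr, hrn, ?_, ?_, ?_⟩ <;>
      simp only [Perm.mul_apply, swap_apply_def] <;> split_ifs <;> omega

lemma inv_lt_inv_add_one_of_not_containsJKI (hπ : π ∈ symmetricGroup n) (hjn : j + 1 ≤ n)
    (hj : π⁻¹ j < π⁻¹ (j + 1)) (h : ¬ContainsJKI n j π) ⦃v : ℕ⦄ (hv1 : 1 ≤ v) (hvj : v ≤ j) :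
    π⁻¹ v < π⁻¹ (j + 1) := by
  rcases hvj.lt_or_eq with hv | rfl
  · by_contra! hge
    have hne : π⁻¹ v ≠ π⁻¹ (j + 1) := fun h => by
      have := π⁻¹.injective h
      omega
    have hjI := apply_mem_Icc (inv_mem hπ) (x := j) (Finset.mem_Icc.2 ⟨by omega, by omega⟩)
    have hvI := apply_mem_Icc (inv_mem hπ) (Finset.mem_Icc.2 ⟨hv1, by omega⟩)
    simp only [Finset.mem_Icc] at hjI hvI
    exact h ⟨π⁻¹ j, π⁻¹ (j + 1), π⁻¹ v, hjI.1, hj, lt_of_le_of_ne hge hne.symm, hvI.2,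
      by simp, by simp, by simpa⟩
  · exact hj

lemma preservesIic_of_not_containsJKI (hπ : π ∈ symmetricGroup n)
    (hdesc : ∀ m ∈ Finset.Icc 1 (n - 1), IsLeftDescent π m → m + 1 = j)
    (h : ¬ContainsJKI n j π) : PreservesIic j π := by
  refine preservesIic_of_mapsTo fun x hx => ?_
  by_contra! hlt
  have hxI : x ∈ Finset.Icc 1 n := by
    by_contra hx'
    rw [mem_symmetricGroup.1 hπ x hx'] at hlt
    omega
  have hπxI := apply_mem_Icc hπ hxI
  simp only [Finset.mem_Icc] at hxI hπxI
  have hno : ∀ m, 1 ≤ m → m + 1 ≤ n → m + 1 ≠ j → π⁻¹ m < π⁻¹ (m + 1) := fun m h1 h2 h3 =>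
    not_isLeftDescent_iff.1 fun hd => h3 (hdesc m (mem_Icc_pred_iff.2 ⟨h1, h2⟩) hd)
  have hjump : π⁻¹ (j + 1) ≤ x := by
    have hmono : StrictMonoOn (⇑π⁻¹) (Set.Icc (j + 1) n) :=
      strictMonoOn_Icc_of_lt_add_one fun m hm hm' => hno m (by omega) (by omega) (by omega)
    calc π⁻¹ (j + 1) ≤ π⁻¹ (π x) := hmono.monotoneOn ⟨le_rfl, by omega⟩ ⟨hlt, hπxI.2⟩ hlt
      _ = x := Perm.inv_eq_iff_eq.2 rfl
  have hbefore := inv_lt_inv_add_one_of_not_containsJKI hπ (by omega)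
    (hno j (by omega) (by omega) (by omega)) h
  have hcard := Finset.card_le_card_of_injOn (⇑π⁻¹) (s := Finset.Icc 1 j)
    (t := Finset.Icc 1 (x - 1)) (fun v hv => by
      simp only [Finset.coe_Icc, Set.mem_Icc] at hv ⊢
      have := hbefore hv.1 hv.2
      have := Finset.mem_Icc.1 (apply_mem_Icc (inv_mem hπ) (Finset.mem_Icc.2 ⟨hv.1, by omega⟩))
      omega) π⁻¹.injective.injOn
  simp only [Nat.card_Icc] at hcard
  omega

end Pattern

theorem not_containsJKI_of_isRWord {n : ℕ} :
    ∀ {L : List ℕ} {π : Perm ℕ} {j : ℕ}, IsRWord n π L → Urun j L ≠ .dead →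
      ¬ContainsJKI n j π
  | [], π, j, h, _ => by
    rw [← (isRWord_iff.1 h).2.1]
    exact PreservesIic.not_containsJKI fun x => Iff.rfl
  | m :: L, π, j, h, hrun => by
    obtain ⟨hd, hL⟩ := IsRWord.isLeftDescent_and_tail h
    by_cases hmj : m = j
    · subst hmj
      rw [Urun_cons_self] at hrun
      rw [← containsJKI_swap_mul_iff_of_isLeftDescent hd]
      exact not_containsJKI_of_isRWord hL hrun
    by_cases hmj' : m + 1 = j
    · subst hmj'
      rw [Urun_cons_pred, foldl_Ustep_ill_ne_dead_iff] at hrun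
      have hπ : π = swap m (m + 1) * wordProd L := by
        rw [(isRWord_iff.1 hL).2.1, swap_mul_self_mul]
      rw [hπ]
      exact ((preservesIic_swap (by omega)).mul (preservesIic_wordProd hrun)).not_containsJKI
    · rw [Urun_cons_of_ne hmj hmj'] at hrun
      rw [← containsJKI_swap_mul_iff hmj hmj']
      exact not_containsJKI_of_isRWord hL hrun

theorem exists_isRWord_of_not_containsJKI {n j : ℕ} {π : Perm ℕ} (hπ : π ∈ symmetricGroup n)
    (h : ¬ContainsJKI n j π) : ∃ L, IsRWord n π L ∧ Urun j L ≠ .dead := by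
  by_cases hfree : ∃ m ∈ Finset.Icc 1 (n - 1), IsLeftDescent π m ∧ m + 1 ≠ j
  · obtain ⟨m, hm, hd, hmj'⟩ := hfree
    have hcount := invCount_swap_mul_of_isLeftDescent hπ hm hd
    have hπ' := mul_mem (swap_mem_symmetricGroup hm) hπ
    by_cases hmj : m = j
    · subst hmj
      obtain ⟨L, hL, hrun⟩ := exists_isRWord_of_not_containsJKI hπ'
        ((containsJKI_swap_mul_iff_of_isLeftDescent hd).not.2 h)
      exact ⟨m :: L, IsRWord.cons hm hd hL, by rwa [Urun_cons_self]⟩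
    · obtain ⟨L, hL, hrun⟩ := exists_isRWord_of_not_containsJKI (j := j) hπ'
        ((containsJKI_swap_mul_iff hmj hmj').not.2 h)
      exact ⟨m :: L, IsRWord.cons hm hd hL, by rwa [Urun_cons_of_ne hmj hmj']⟩
  push Not at hfree
  by_cases h1 : π = 1
  · exact ⟨[], isRWord_iff.2 ⟨by simp, by simp [h1, wordProd], by simp [h1, invCount_one]⟩,
      by simp [Urun]⟩
  obtain ⟨m, hm, hd⟩ := exists_isLeftDescent hπ h1
  obtain rfl := hfree m hm hd
  obtain ⟨L, hL, hprod, hlen, hjL⟩ := exists_word_of_preservesIic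
    (mul_mem (swap_mem_symmetricGroup hm) hπ)
    ((preservesIic_swap (by omega)).mul (preservesIic_of_not_containsJKI hπ hfree h))
  refine ⟨m :: L, IsRWord.cons hm hd (isRWord_iff.2 ⟨hL, hprod, hlen⟩), ?_⟩
  rwa [Urun_cons_pred, foldl_Ustep_ill_ne_dead_iff]
termination_by invCount n π

end Permutree

theorem permutree_automaton_U_general (n j : ℕ) (π : Equiv.Perm ℕ)
    (hπ : ∀ x : ℕ, x ∉ Finset.Icc 1 n → π x = x) :
    (∃ L : List ℕ, IsRWord n π L ∧ Urun j L ≠ AState.dead) ↔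
      ¬∃ p q r : ℕ, 1 ≤ p ∧ p < q ∧ q < r ∧ r ≤ n ∧
        π p = j ∧ j < π q ∧ π r < j :=
  ⟨fun ⟨_, hL, hrun⟩ => Permutree.not_containsJKI_of_isRWord hL hrun,
    Permutree.exists_isRWord_of_not_containsJKI (Permutree.mem_symmetricGroup.2 hπ)⟩

/-- For `j ∈ [2, n-1]` and `π ∈ S_n` (a permutation of `ℕ` fixing everything outside
`[1,n]`, in one-line notation `π(1) π(2) ⋯ π(n)`): `π` has a reduced word accepted by
the automaton `𝕌(j)` (i.e. not ending in the dead state) if and only if `π` avoids the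
pattern `jki`, i.e. no occurrence of the value `j` is followed later by a value `k > j`
followed later by a value `i < j`. -/
theorem permutree_automaton_U (n j : ℕ) (hj2 : 2 ≤ j) (hjn : j ≤ n - 1)
    (π : Equiv.Perm ℕ) (hπ : ∀ x : ℕ, x ∉ Finset.Icc 1 n → π x = x) :
    (∃ L : List ℕ, IsRWord n π L ∧ Urun j L ≠ AState.dead) ↔
      ¬∃ p q r : ℕ, 1 ≤ p ∧ p < q ∧ q < r ∧ r ≤ n ∧
        π p = j ∧ j < π q ∧ π r < j :=
  permutree_automaton_U_general n j π hπ
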